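/- arXiv:1512.02300 — 6 statements merged into one kernel-verified Lean document; each statement's English description precedes it below -/
import Mathlib

section
/- Let Y be a random variable taking values in [0,1] and suppose that y·P[Y ≥ y] ≤ v for all y ∈ [0,1], where v ∈ [0,1]. Then Var(Y) ≤ 2v. -/
/-!
By the layer-cake formula, `E[Y²] = ∫₀¹ 2t · P[Y ≥ t] dt`, and the revenue bound makes the
integrand at most `2v`. Hence `Var(Y) ≤ E[Y²] ≤ 2v`.
-/

open MeasureTheory ProbabilityTheory Set
open scoped ENNReal

namespace MeasureTheory

variable {α : Type*} [MeasurableSpace α] {μ : Measure α} {f : α → ℝ}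

theorem lintegral_sq_eq_lintegral_meas_le_mul (hf_nn : 0 ≤ᵐ[μ] f) (hf : AEMeasurable f μ) :
    ∫⁻ ω, ENNReal.ofReal (f ω ^ 2) ∂μ
      = ∫⁻ t in Ioi 0, μ {a | t ≤ f a} * ENNReal.ofReal (2 * t) := by
  have h_sq : ∀ x : ℝ, ∫ t in (0 : ℝ)..x, 2 * t = x ^ 2 := fun x => by
    rw [intervalIntegral.integral_const_mul, integral_id]
    ring
  rw [← lintegral_comp_eq_lintegral_meas_le_mul (g := fun t => 2 * t) μ hf_nn hf
    (fun t _ => (continuous_const_mul 2).intervalIntegrable 0 t)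
    (ae_restrict_of_forall_mem measurableSet_Ioi fun t (ht : 0 < t) => by positivity)]
  simp only [h_sq]

theorem lintegral_sq_le_of_mul_meas_le {v : ℝ≥0∞} (hf_nn : 0 ≤ᵐ[μ] f)
    (hf : AEMeasurable f μ) (hf_le : ∀ᵐ ω ∂μ, f ω ≤ 1)
    (htail : ∀ t ∈ Ioc (0 : ℝ) 1, ENNReal.ofReal t * μ {a | t ≤ f a} ≤ v) :
    ∫⁻ ω, ENNReal.ofReal (f ω ^ 2) ∂μ ≤ 2 * v := by
  have h_gt_one : μ {a | 1 < f a} = 0 := by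
    rw [measure_eq_zero_iff_ae_notMem]
    filter_upwards [hf_le] with a ha using not_lt.mpr ha
  have h_pointwise : ∀ t ∈ Ioi (0 : ℝ),
      μ {a | t ≤ f a} * ENNReal.ofReal (2 * t) ≤ (Ioc 0 1).indicator (fun _ => 2 * v) t := by
    intro t (ht : 0 < t)
    by_cases ht1 : t ≤ 1
    · rw [indicator_of_mem (show t ∈ Ioc 0 1 from ⟨ht, ht1⟩), ENNReal.ofReal_mul zero_le_two,
        ENNReal.ofReal_ofNat, mul_comm, mul_assoc]
      exact mul_le_mul_right (htail t ⟨ht, ht1⟩) 2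
    · have : μ {a | t ≤ f a} = 0 :=
        measure_mono_null (fun a (ha : t ≤ f a) => (not_le.mp ht1).trans_le ha) h_gt_one
      simp [this]
  calc ∫⁻ ω, ENNReal.ofReal (f ω ^ 2) ∂μ
      = ∫⁻ t in Ioi 0, μ {a | t ≤ f a} * ENNReal.ofReal (2 * t) :=
        lintegral_sq_eq_lintegral_meas_le_mul hf_nn hf
    _ ≤ ∫⁻ t in Ioi 0, (Ioc 0 1).indicator (fun _ => 2 * v) t :=
        setLIntegral_mono' measurableSet_Ioi h_pointwise
    _ = 2 * v := by
        rw [lintegral_indicator_const measurableSet_Ioc, Measure.restrict_apply measurableSet_Ioc,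
          inter_eq_left.mpr Ioc_subset_Ioi_self, Real.volume_Ioc]
        simp

theorem integral_sq_le_of_mul_measureReal_le [IsFiniteMeasure μ] {v : ℝ} (hf_nn : 0 ≤ᵐ[μ] f)
    (hf : AEMeasurable f μ) (hf_le : ∀ᵐ ω ∂μ, f ω ≤ 1)
    (htail : ∀ t ∈ Ioc (0 : ℝ) 1, t * μ.real {a | t ≤ f a} ≤ v) :
    ∫ ω, f ω ^ 2 ∂μ ≤ 2 * v := by
  have hv : 0 ≤ v :=
    (mul_nonneg zero_le_one measureReal_nonneg).trans (htail 1 ⟨one_pos, le_rfl⟩)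
  have htail' : ∀ t ∈ Ioc (0 : ℝ) 1, ENNReal.ofReal t * μ {a | t ≤ f a} ≤ ENNReal.ofReal v := by
    intro t ht
    rw [← ofReal_measureReal, ← ENNReal.ofReal_mul ht.1.le]
    exact ENNReal.ofReal_le_ofReal (htail t ht)
  rw [integral_eq_lintegral_of_nonneg_ae (hf_nn.mono fun ω _ => sq_nonneg _)
    (hf.pow_const 2).aestronglyMeasurable]
  refine ENNReal.toReal_le_of_le_ofReal (by positivity) ?_
  rw [ENNReal.ofReal_mul zero_le_two, ENNReal.ofReal_ofNat]
  exact lintegral_sq_le_of_mul_meas_le hf_nn hf hf_le htail'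

end MeasureTheory

theorem stmt_6_general {Ω : Type*} [MeasurableSpace Ω] {μ : Measure Ω} [IsProbabilityMeasure μ]
    (Y : Ω → ℝ) (hY : Measurable Y) (hrange : ∀ ω, Y ω ∈ Set.Icc (0 : ℝ) 1)
    (v : ℝ)
    (hrev : ∀ y ∈ Set.Icc (0 : ℝ) 1, y * (μ {ω | y ≤ Y ω}).toReal ≤ v) :
    variance Y μ ≤ 2 * v :=
  (variance_le_expectation_sq hY.aestronglyMeasurable).trans <|
    integral_sq_le_of_mul_measureReal_le (ae_of_all _ fun ω => (hrange ω).1) hY.aemeasurable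
      (ae_of_all _ fun ω => (hrange ω).2) fun t ht => hrev t (Ioc_subset_Icc_self ht)

theorem stmt_6 {Ω : Type*} [MeasurableSpace Ω] {μ : Measure Ω} [IsProbabilityMeasure μ]
    (Y : Ω → ℝ) (hY : Measurable Y) (hrange : ∀ ω, Y ω ∈ Set.Icc (0 : ℝ) 1)
    (v : ℝ) (hv : v ∈ Set.Icc (0 : ℝ) 1)
    (hrev : ∀ y ∈ Set.Icc (0 : ℝ) 1, y * (μ {ω | y ≤ Y ω}).toReal ≤ v) :
    variance Y μ ≤ 2 * v :=
  stmt_6_general Y hY hrange v hrev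
end

section
/- Let p_1,...,p_n and r_1,...,r_n be real numbers with 0 ≤ p_i ≤ r_i for all i and Σ r_i = 1. Let τ = Σ p_i(1 - r_i). Then ∏_{i=1}^n (1 - p_i) + Σ_{i=1}^n p_i ∏_{j ≠ i} (1 - p_j) ≤ (5/4 + τ) / e^τ. -/
/-!
The left side is the probability that at most one of independent events of probabilities `p i`
occurs, so it is at most `1`, and `exp τ ≤ 5/4 + τ` settles `τ ≤ 3/5`. For larger `τ`, the bound
`1 - x ≤ exp (-x)` gives `LHS ≤ (1 + ∑ p i * exp (p i)) * exp (-s)` with `s = ∑ p i = τ + t`,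
`t = ∑ p i * r i`; the chord bound `exp x ≤ 1 + (e - 1) x` on `[0, 1]` together with `p i ≤ r i`
turns this into `(1 + τ + e t) * exp (-s)`, and `1 + τ + e t ≤ (5/4 + τ) * exp t` once `τ ≥ 3/5`.
-/

open Finset

namespace Real

theorem exp_le_five_fourths_add {x : ℝ} (hx0 : 0 ≤ x) (hx : x ≤ 3 / 5) :
    exp x ≤ 5 / 4 + x := by
  have h := exp_bound' hx0 (hx.trans (by norm_num)) (n := 3) (by norm_num)
  norm_num [Finset.sum_range_succ, Nat.factorial] at h
  nlinarith [mul_nonneg (mul_nonneg hx0 hx0) (sub_nonneg.2 hx)]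

theorem exp_le_one_add_mul_of_mem_Icc {x : ℝ} (hx0 : 0 ≤ x) (hx1 : x ≤ 1) :
    exp x ≤ 1 + (exp 1 - 1) * x := by
  have h := convexOn_exp.2 (Set.mem_univ 0) (Set.mem_univ 1) (sub_nonneg.2 hx1) hx0
    (sub_add_cancel 1 x)
  simp only [smul_eq_mul, mul_zero, mul_one, zero_add, exp_zero] at h
  linarith

theorem one_add_add_exp_one_mul_le {τ t : ℝ} (hτ : 3 / 5 ≤ τ) (ht : 0 ≤ t) :
    1 + τ + exp 1 * t ≤ (5 / 4 + τ) * exp t := by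
  have he : exp 1 < 2.72 := exp_one_lt_d9.trans (by norm_num)
  calc 1 + τ + exp 1 * t ≤ (5 / 4 + τ) * (1 + t + t ^ 2 / 2) := by
        nlinarith [mul_nonneg (sub_nonneg.2 hτ) ht, mul_nonneg (sub_nonneg.2 hτ) (sq_nonneg t),
          sq_nonneg (t - 1 / 2)]
    _ ≤ (5 / 4 + τ) * exp t := by
        gcongr
        exact quadratic_le_exp_of_nonneg ht

end Real

open Real

variable {ι : Type*}

theorem prod_one_sub_le_exp_neg_sum (S : Finset ι) {p : ι → ℝ} (hp1 : ∀ i, p i ≤ 1) :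
    ∏ i ∈ S, (1 - p i) ≤ exp (-∑ i ∈ S, p i) := by
  rw [← sum_neg_distrib, exp_sum]
  exact prod_le_prod (fun i _ => sub_nonneg.2 (hp1 i)) fun i _ => one_sub_le_exp_neg (p i)

theorem sum_mul_exp_le (S : Finset ι) {p r : ι → ℝ} (hp0 : ∀ i, 0 ≤ p i)
    (hpr : ∀ i, p i ≤ r i) (hr1 : ∀ i, r i ≤ 1) :
    ∑ i ∈ S, p i * exp (p i) ≤ ∑ i ∈ S, p i + (exp 1 - 1) * ∑ i ∈ S, p i * r i := by
  have hchord : ∀ i, exp (p i) ≤ 1 + (exp 1 - 1) * r i := fun i =>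
    (exp_le_one_add_mul_of_mem_Icc (hp0 i) ((hpr i).trans (hr1 i))).trans
      (by gcongr; exacts [sub_nonneg.2 (one_le_exp zero_le_one), hpr i])
  calc ∑ i ∈ S, p i * exp (p i) ≤ ∑ i ∈ S, p i * (1 + (exp 1 - 1) * r i) :=
        sum_le_sum fun i _ => mul_le_mul_of_nonneg_left (hchord i) (hp0 i)
    _ = ∑ i ∈ S, p i + (exp 1 - 1) * ∑ i ∈ S, p i * r i := by
        rw [mul_sum, ← sum_add_distrib]; exact sum_congr rfl fun i _ => by ring

variable [DecidableEq ι]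

def probAtMostOne (S : Finset ι) (p : ι → ℝ) : ℝ :=
  ∏ i ∈ S, (1 - p i) + ∑ i ∈ S, p i * ∏ j ∈ S.erase i, (1 - p j)

theorem probAtMostOne_le_one (S : Finset ι) {p : ι → ℝ} (hp0 : ∀ i, 0 ≤ p i)
    (hp1 : ∀ i, p i ≤ 1) : probAtMostOne S p ≤ 1 := by
  induction S using Finset.induction with
  | empty => simp [probAtMostOne]
  | @insert a S ha ih =>
    have hB : 0 ≤ ∑ i ∈ S, p i * ∏ j ∈ S.erase i, (1 - p j) :=
      sum_nonneg fun i _ => mul_nonneg (hp0 i) (prod_nonneg fun j _ => sub_nonneg.2 (hp1 j))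
    have herase : ∀ i ∈ S, p i * ∏ j ∈ (insert a S).erase i, (1 - p j)
        = (1 - p a) * (p i * ∏ j ∈ S.erase i, (1 - p j)) := by
      intro i hi
      have hai : a ≠ i := fun h => ha (h ▸ hi)
      rw [erase_insert_of_ne hai, prod_insert fun h => ha (mem_of_mem_erase h)]
      ring
    unfold probAtMostOne at ih ⊢
    rw [prod_insert ha, sum_insert ha, erase_insert ha, sum_congr rfl herase, ← mul_sum]
    -- the new total is `A + (1 - p a) * B` where `A + B` is the old one
    nlinarith [hp0 a]

theorem probAtMostOne_le_exp (S : Finset ι) {p : ι → ℝ} (hp0 : ∀ i, 0 ≤ p i)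
    (hp1 : ∀ i, p i ≤ 1) :
    probAtMostOne S p ≤ (1 + ∑ i ∈ S, p i * exp (p i)) * exp (-∑ i ∈ S, p i) := by
  have hterm : ∀ i ∈ S, p i * ∏ j ∈ S.erase i, (1 - p j)
      ≤ p i * exp (p i) * exp (-∑ j ∈ S, p j) := by
    intro i hi
    have hsum : -∑ j ∈ S.erase i, p j = p i + -∑ j ∈ S, p j := by
      rw [← add_sum_erase S p hi]; ring
    rw [mul_assoc, ← exp_add, ← hsum]
    exact mul_le_mul_of_nonneg_left (prod_one_sub_le_exp_neg_sum _ hp1) (hp0 i)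
  calc probAtMostOne S p
      ≤ exp (-∑ i ∈ S, p i) + ∑ i ∈ S, p i * exp (p i) * exp (-∑ j ∈ S, p j) :=
        add_le_add (prod_one_sub_le_exp_neg_sum S hp1) (sum_le_sum hterm)
    _ = (1 + ∑ i ∈ S, p i * exp (p i)) * exp (-∑ i ∈ S, p i) := by
        rw [← sum_mul]; ring

theorem stmt_8 (n : ℕ) (p r : Fin n → ℝ)
    (hp : ∀ i, 0 ≤ p i) (hpr : ∀ i, p i ≤ r i) (hr : ∑ i, r i = 1)
    (τ : ℝ) (hτ : τ = ∑ i, p i * (1 - r i)) :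
    (∏ i, (1 - p i)) + ∑ i, p i * ∏ j ∈ univ.erase i, (1 - p j) ≤
      (5 / 4 + τ) / Real.exp τ := by
  have hr0 : ∀ i, 0 ≤ r i := fun i => (hp i).trans (hpr i)
  have hr1 : ∀ i, r i ≤ 1 := fun i => hr ▸ single_le_sum (fun j _ => hr0 j) (mem_univ i)
  have hp1 : ∀ i, p i ≤ 1 := fun i => (hpr i).trans (hr1 i)
  have hτ0 : 0 ≤ τ := hτ ▸ sum_nonneg fun i _ => mul_nonneg (hp i) (sub_nonneg.2 (hr1 i))
  change probAtMostOne univ p ≤ _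
  rw [le_div_iff₀ (exp_pos τ)]
  rcases le_or_gt τ (3 / 5) with hsmall | hlarge
  · simpa only [one_mul] using mul_le_mul (probAtMostOne_le_one univ hp hp1)
      (exp_le_five_fourths_add hτ0 hsmall) (exp_pos τ).le (by linarith)
  set t := ∑ i, p i * r i
  have ht0 : 0 ≤ t := sum_nonneg fun i _ => mul_nonneg (hp i) (hr0 i)
  have hs : ∑ i, p i = τ + t := by
    rw [hτ, ← sum_add_distrib]; exact sum_congr rfl fun i _ => by ring
  have hexp : ∑ i, p i * exp (p i) ≤ τ + exp 1 * t := by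
    linarith [sum_mul_exp_le univ hp hpr hr1]
  calc probAtMostOne univ p * exp τ
      ≤ (1 + ∑ i, p i * exp (p i)) * exp (-(τ + t)) * exp τ := by
        rw [← hs]; gcongr; exact probAtMostOne_le_exp univ hp hp1
    _ ≤ (5 / 4 + τ) * exp t * exp (-(τ + t)) * exp τ := by
        gcongr; linarith [one_add_add_exp_one_mul_le hlarge.le ht0]
    _ = 5 / 4 + τ := by
        rw [mul_assoc, mul_assoc, ← exp_add, ← exp_add, show t + (-(τ + t) + τ) = 0 by ring,
          exp_zero, mul_one]
end

section
/- Let p_1,...,p_n and r_1,...,r_n be real numbers with 0 ≤ p_i < 1, p_i ≤ r_i for all i, and Σ r_i = 1. Then Σ_{i=1}^n p_i²(1-r_i)²/(1-p_i) - Σ_{i≠j} p_i(1-r_i)·p_j r_j/(1-p_j) ≤ 1/4. -/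
/-!
Since every `r i` lies in `[0, 1]`, the double sum is nonnegative and can be dropped. In each
remaining term `1 - r i ≤ 1 - p i`, so the term is at most `p i ^ 2 * (1 - p i) ≤ p i / 4`, and
`∑ p i ≤ ∑ r i = 1`.
-/

open Finset

lemma sq_mul_one_sub_sq_div_one_sub_le {p r : ℝ} (hp0 : 0 ≤ p) (hp1 : p < 1) (hpr : p ≤ r)
    (hr1 : r ≤ 1) : p ^ 2 * (1 - r) ^ 2 / (1 - p) ≤ p / 4 := by
  have hq : 0 < 1 - p := by linarith
  calc p ^ 2 * (1 - r) ^ 2 / (1 - p) ≤ p ^ 2 * (1 - p) ^ 2 / (1 - p) := by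
        gcongr
    _ = p * (p * (1 - p)) := by field_simp
    _ ≤ p * (1 / 4) := by gcongr; nlinarith [sq_nonneg (2 * p - 1)]
    _ = p / 4 := by ring

theorem stmt_9 (n : ℕ) (p r : Fin n → ℝ)
    (hp0 : ∀ i, 0 ≤ p i) (hp1 : ∀ i, p i < 1) (hpr : ∀ i, p i ≤ r i)
    (hr : ∑ i, r i = 1) :
    (∑ i, (p i) ^ 2 * (1 - r i) ^ 2 / (1 - p i)) -
        (∑ i, ∑ j ∈ univ.erase i, p i * (1 - r i) * (p j * r j / (1 - p j))) ≤ 1 / 4 := by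
  have hr0 : ∀ i, 0 ≤ r i := fun i => (hp0 i).trans (hpr i)
  have hr1 : ∀ i, r i ≤ 1 := fun i => hr ▸ single_le_sum (fun j _ => hr0 j) (mem_univ i)
  have hcross : 0 ≤ ∑ i, ∑ j ∈ univ.erase i, p i * (1 - r i) * (p j * r j / (1 - p j)) :=
    sum_nonneg fun i _ => sum_nonneg fun j _ =>
      mul_nonneg (mul_nonneg (hp0 i) (sub_nonneg.2 (hr1 i)))
        (div_nonneg (mul_nonneg (hp0 j) (hr0 j)) (sub_nonneg.2 (hp1 j).le))
  calc _ ≤ ∑ i, (p i) ^ 2 * (1 - r i) ^ 2 / (1 - p i) := sub_le_self _ hcross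
    _ ≤ ∑ i, p i / 4 := sum_le_sum fun i _ =>
        sq_mul_one_sub_sq_div_one_sub_le (hp0 i) (hp1 i) (hpr i) (hr1 i)
    _ ≤ ∑ i, r i / 4 := sum_le_sum fun i _ => by linarith [hpr i]
    _ = 1 / 4 := by rw [← sum_div, hr]
end

section
/- Let Y₁, Y₂ be i.i.d. random variables with the distribution P[Y ≥ y] = 1 for y = 0, ρ for 0 < y ≤ 1, and ρ/y for 1 ≤ y ≤ 2 (so mass 1-ρ at 0, density ρ/y² on [1,2), and mass ρ/2 at 2). Then for a bundle price z ∈ [1,2], z·P[Y₁ + Y₂ ≥ z] = 2ρ + (z-2)ρ², which is maximized over [1,2] at z = 2 with value 2ρ. -/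
open MeasureTheory ProbabilityTheory Set Filter

/-!
A tail that is constant on `(0, 1]` leaves no mass in `(0, 1)`, so each `Yᵢ` lives on
`{0} ∪ [1, ∞)` almost surely. For `z ∈ [1, 2]` the event `z ≤ Y₁ + Y₂` is then, up to a null
set, the disjoint union of `{Y₁ ≥ 1, Y₂ ≥ 1}`, `{Y₁ < 1, Y₂ ≥ z}` and `{Y₁ ≥ z, Y₂ < 1}`, whose
probabilities factor by independence into `ρ²`, `(1 - ρ) ρ / z` and `ρ / z (1 - ρ)`.
-/

theorem ProbabilityTheory.IndepFun.measureReal_inter_preimage_eq_mul {Ω β β' : Type*}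
    [MeasurableSpace Ω] [MeasurableSpace β] [MeasurableSpace β'] {μ : Measure Ω}
    {X : Ω → β} {Y : Ω → β'} (h : IndepFun X Y μ) {s : Set β} {t : Set β'}
    (hs : MeasurableSet s) (ht : MeasurableSet t) :
    μ.real (X ⁻¹' s ∩ Y ⁻¹' t) = μ.real (X ⁻¹' s) * μ.real (Y ⁻¹' t) := by
  simp only [Measure.real, h.measure_inter_preimage_eq_mul _ _ hs ht, ENNReal.toReal_mul]

theorem le_add_iff_of_eq_zero_or_one_le {a b z : ℝ} (hz : z ∈ Ioc 0 2)
    (ha : a = 0 ∨ 1 ≤ a) (hb : b = 0 ∨ 1 ≤ b) :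
    z ≤ a + b ↔ (1 ≤ a ∧ 1 ≤ b) ∨ (a < 1 ∧ z ≤ b) ∨ (z ≤ a ∧ b < 1) := by
  obtain ⟨hz0, hz2⟩ := hz
  rcases ha with rfl | ha <;> rcases hb with rfl | hb <;> grind

section TailFunction

variable {Ω : Type*} [MeasurableSpace Ω] {μ : Measure Ω} {Y : Ω → ℝ}

theorem measure_preimage_Ioo_eq_zero_of_measureReal_Ici_eq [IsFiniteMeasure μ]
    (hY : Measurable Y) {a b : ℝ}
    (hflat : ∀ t ∈ Ioc a b, μ.real {ω | t ≤ Y ω} = μ.real {ω | b ≤ Y ω}) :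
    μ (Y ⁻¹' Ioo a b) = 0 := by
  rcases le_or_gt b a with hba | hab
  · simp [Ioo_eq_empty_of_le hba]
  obtain ⟨u, -, hu_mem, hu_lim⟩ := exists_seq_strictAnti_tendsto' hab
  have hcover : Y ⁻¹' Ioo a b ⊆ ⋃ n, {ω | u n ≤ Y ω} \ {ω | b ≤ Y ω} := by
    rintro ω ⟨ha, hb⟩
    obtain ⟨n, hn⟩ := (hu_lim.eventually (gt_mem_nhds ha)).exists
    exact mem_iUnion.2 ⟨n, hn.le, hb.not_ge⟩
  refine measure_mono_null hcover (measure_iUnion_null fun n => ?_)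
  have hsub : {ω | b ≤ Y ω} ⊆ {ω | u n ≤ Y ω} := fun ω hω => (hu_mem n).2.le.trans hω
  rw [← measureReal_eq_zero_iff, measureReal_sdiff hsub (hY measurableSet_Ici),
    hflat _ ⟨(hu_mem n).1, (hu_mem n).2.le⟩, sub_self]

theorem ae_eq_zero_or_one_le_of_measureReal_Ici [IsProbabilityMeasure μ] (hY : Measurable Y)
    (h0 : μ.real {ω | 0 ≤ Y ω} = 1)
    (hflat : ∀ t ∈ Ioc 0 1, μ.real {ω | t ≤ Y ω} = μ.real {ω | 1 ≤ Y ω}) :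
    ∀ᵐ ω ∂μ, Y ω = 0 ∨ 1 ≤ Y ω := by
  have hnonneg : ∀ᵐ ω ∂μ, 0 ≤ Y ω := by
    have hm : MeasurableSet {ω | 0 ≤ Y ω} := hY measurableSet_Ici
    refine (mem_ae_iff (s := {ω | 0 ≤ Y ω})).2 ?_
    rw [← measureReal_eq_zero_iff, probReal_compl_eq_one_sub hm, h0, sub_self]
  have hgap : ∀ᵐ ω ∂μ, Y ω ∉ Ioo 0 1 :=
    measure_eq_zero_iff_ae_notMem.1 (measure_preimage_Ioo_eq_zero_of_measureReal_Ici_eq hY hflat)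
  filter_upwards [hnonneg, hgap] with ω hω0 hω1
  rcases hω0.eq_or_lt with h | h
  exacts [Or.inl h.symm, Or.inr (not_lt.1 fun h' => hω1 ⟨h, h'⟩)]

theorem measureReal_lt_eq_one_sub [IsProbabilityMeasure μ] (hY : Measurable Y) (c : ℝ) :
    μ.real {ω | Y ω < c} = 1 - μ.real {ω | c ≤ Y ω} := by
  have hm : MeasurableSet {ω | c ≤ Y ω} := hY measurableSet_Ici
  rw [← probReal_compl_eq_one_sub hm, compl_ofPred]
  simp only [not_le]

end TailFunction

theorem measureReal_le_add_of_eq_zero_or_one_le {Ω : Type*} [MeasurableSpace Ω] {μ : Measure Ω}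
    [IsProbabilityMeasure μ] {Y₁ Y₂ : Ω → ℝ} (hY₁ : Measurable Y₁) (hY₂ : Measurable Y₂)
    (hindep : IndepFun Y₁ Y₂ μ) (h₁ : ∀ᵐ ω ∂μ, Y₁ ω = 0 ∨ 1 ≤ Y₁ ω)
    (h₂ : ∀ᵐ ω ∂μ, Y₂ ω = 0 ∨ 1 ≤ Y₂ ω) {z : ℝ} (hz : z ∈ Icc 1 2) :
    μ.real {ω | z ≤ Y₁ ω + Y₂ ω} =
      μ.real {ω | 1 ≤ Y₁ ω} * μ.real {ω | 1 ≤ Y₂ ω} +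
        ((1 - μ.real {ω | 1 ≤ Y₁ ω}) * μ.real {ω | z ≤ Y₂ ω} +
          μ.real {ω | z ≤ Y₁ ω} * (1 - μ.real {ω | 1 ≤ Y₂ ω})) := by
  set E₁ : Set Ω := Y₁ ⁻¹' Ici 1 ∩ Y₂ ⁻¹' Ici 1
  set E₂ : Set Ω := Y₁ ⁻¹' Iio 1 ∩ Y₂ ⁻¹' Ici z
  set E₃ : Set Ω := Y₁ ⁻¹' Ici z ∩ Y₂ ⁻¹' Iio 1
  have hae : ({ω | z ≤ Y₁ ω + Y₂ ω} : Set Ω) =ᵐ[μ] (E₁ ∪ (E₂ ∪ E₃) : Set Ω) := by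
    filter_upwards [h₁, h₂] with ω hω₁ hω₂
    exact propext (le_add_iff_of_eq_zero_or_one_le ⟨by linarith [hz.1], hz.2⟩ hω₁ hω₂)
  have d₁₂ : Disjoint E₁ E₂ :=
    disjoint_left.2 fun ω h h' => (show Y₁ ω < 1 from h'.1).not_ge h.1
  have d₁₃ : Disjoint E₁ E₃ :=
    disjoint_left.2 fun ω h h' => (show Y₂ ω < 1 from h'.2).not_ge h.2
  have d₂₃ : Disjoint E₂ E₃ :=
    disjoint_left.2 fun ω h h' => (show Y₁ ω < 1 from h.1).not_ge (hz.1.trans h'.1)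
  have m₂ : MeasurableSet E₂ := (hY₁ measurableSet_Iio).inter (hY₂ measurableSet_Ici)
  have m₃ : MeasurableSet E₃ := (hY₁ measurableSet_Ici).inter (hY₂ measurableSet_Iio)
  rw [measureReal_congr hae, measureReal_union (disjoint_union_right.2 ⟨d₁₂, d₁₃⟩) (m₂.union m₃),
    measureReal_union d₂₃ m₃,
    hindep.measureReal_inter_preimage_eq_mul measurableSet_Ici measurableSet_Ici,
    hindep.measureReal_inter_preimage_eq_mul measurableSet_Iio measurableSet_Ici,
    hindep.measureReal_inter_preimage_eq_mul measurableSet_Ici measurableSet_Iio]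
  simp only [preimage, mem_Ici, mem_Iio, measureReal_lt_eq_one_sub hY₁,
    measureReal_lt_eq_one_sub hY₂]

theorem stmt_15_general {Ω : Type*} [MeasurableSpace Ω] {μ : Measure Ω} [IsProbabilityMeasure μ]
    (Y₁ Y₂ : Ω → ℝ) (hY₁ : Measurable Y₁) (hY₂ : Measurable Y₂)
    (hindep : IndepFun Y₁ Y₂ μ)
    (ρ : ℝ)
    (htail : ∀ Y ∈ ({Y₁, Y₂} : Set (Ω → ℝ)),
      (∀ y : ℝ, y ≤ 0 → (μ {ω | y ≤ Y ω}).toReal = 1) ∧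
      (∀ y : ℝ, 0 < y → y ≤ 1 → (μ {ω | y ≤ Y ω}).toReal = ρ) ∧
      (∀ y : ℝ, 1 ≤ y → y ≤ 2 → (μ {ω | y ≤ Y ω}).toReal = ρ / y) ∧
      (∀ y : ℝ, 2 < y → (μ {ω | y ≤ Y ω}).toReal = 0)) :
    (∀ z ∈ Set.Icc (1 : ℝ) 2,
        z * (μ {ω | z ≤ Y₁ ω + Y₂ ω}).toReal = 2 * ρ + (z - 2) * ρ ^ 2) ∧
      (∀ z ∈ Set.Icc (1 : ℝ) 2, z * (μ {ω | z ≤ Y₁ ω + Y₂ ω}).toReal ≤ 2 * ρ) ∧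
      (2 : ℝ) * (μ {ω | (2 : ℝ) ≤ Y₁ ω + Y₂ ω}).toReal = 2 * ρ := by
  simp only [← measureReal_def] at htail ⊢
  have hsupp : ∀ Y ∈ ({Y₁, Y₂} : Set (Ω → ℝ)), Measurable Y → ∀ᵐ ω ∂μ, Y ω = 0 ∨ 1 ≤ Y ω := by
    intro Y hY hmeas
    obtain ⟨h0, h1, -⟩ := htail Y hY
    exact ae_eq_zero_or_one_le_of_measureReal_Ici hmeas (h0 0 le_rfl)
      fun t ht => (h1 t ht.1 ht.2).trans (h1 1 one_pos le_rfl).symm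
  obtain ⟨-, h₁, h₁', -⟩ := htail Y₁ (by simp)
  obtain ⟨-, h₂, h₂', -⟩ := htail Y₂ (by simp)
  have hrevenue : ∀ z ∈ Icc (1 : ℝ) 2,
      z * μ.real {ω | z ≤ Y₁ ω + Y₂ ω} = 2 * ρ + (z - 2) * ρ ^ 2 := by
    rintro z ⟨hz1, hz2⟩
    rw [measureReal_le_add_of_eq_zero_or_one_le hY₁ hY₂ hindep (hsupp Y₁ (by simp) hY₁)
      (hsupp Y₂ (by simp) hY₂) ⟨hz1, hz2⟩, h₁ 1 one_pos le_rfl, h₂ 1 one_pos le_rfl,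
      h₁' z hz1 hz2, h₂' z hz1 hz2]
    field_simp
    ring
  refine ⟨hrevenue, fun z hz => ?_, by simpa using hrevenue 2 ⟨one_le_two, le_rfl⟩⟩
  rw [hrevenue z hz]
  nlinarith [hz.2, sq_nonneg ρ]

theorem stmt_15 {Ω : Type*} [MeasurableSpace Ω] {μ : Measure Ω} [IsProbabilityMeasure μ]
    (Y₁ Y₂ : Ω → ℝ) (hY₁ : Measurable Y₁) (hY₂ : Measurable Y₂)
    (hindep : IndepFun Y₁ Y₂ μ)
    (ρ : ℝ) (hρ0 : 0 < ρ) (hρ1 : ρ < 1)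
    (htail : ∀ Y ∈ ({Y₁, Y₂} : Set (Ω → ℝ)),
      (∀ y : ℝ, y ≤ 0 → (μ {ω | y ≤ Y ω}).toReal = 1) ∧
      (∀ y : ℝ, 0 < y → y ≤ 1 → (μ {ω | y ≤ Y ω}).toReal = ρ) ∧
      (∀ y : ℝ, 1 ≤ y → y ≤ 2 → (μ {ω | y ≤ Y ω}).toReal = ρ / y) ∧
      (∀ y : ℝ, 2 < y → (μ {ω | y ≤ Y ω}).toReal = 0)) :
    (∀ z ∈ Set.Icc (1 : ℝ) 2,
        z * (μ {ω | z ≤ Y₁ ω + Y₂ ω}).toReal = 2 * ρ + (z - 2) * ρ ^ 2) ∧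
      (∀ z ∈ Set.Icc (1 : ℝ) 2, z * (μ {ω | z ≤ Y₁ ω + Y₂ ω}).toReal ≤ 2 * ρ) ∧
      (2 : ℝ) * (μ {ω | (2 : ℝ) ≤ Y₁ ω + Y₂ ω}).toReal = 2 * ρ :=
  stmt_15_general Y₁ Y₂ hY₁ hY₂ hindep ρ htail
end

section
/- Let Y₁, Y₂ be i.i.d. with mass 1-ρ at 0, density ρ/y² on [1,2), and mass ρ/2 at 2. Then for z ∈ (2,3], z·P[Y₁ + Y₂ ≥ z] = 2ρ²·(ln(z-1)/z + 1), which is strictly increasing in z on (2,3] and at z = 3 equals 2ρ²(1 + (ln 2)/3). -/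
/-!
The tail function `y ↦ P(Y ≥ y)` determines the law of `Y`: mass `1 - ρ` at `0`, density `ρ / y²`
on `[1, 2)` and mass `ρ / 2` at `2`. By independence `P(Y₁ + Y₂ ≥ z) = E[P(Y₂ ≥ z - Y₁)]`, and for
`z ∈ (2, 3]` the atom at `0` does not contribute, the atom at `2` contributes `ρ / 2 · ρ`, and the
density part splits at `z - 1`: on `[1, z - 1)` the tail at `z - x` is `ρ / (z - x)`, integrated by
partial fractions, and on `[z - 1, 2)` it is `ρ`. Monotonicity follows from
`(log (z - 1) / z)' = (z / (z - 1) - log (z - 1)) / z²`, positive since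
`log (z - 1) < 1 < z / (z - 1)` for `z < 1 + e`.
-/

open MeasureTheory ProbabilityTheory Set Real

lemma lintegral_Ico_ofReal_eq_sub_of_hasDerivAt {f F : ℝ → ℝ} {a b : ℝ} (hab : a ≤ b)
    (hF : ∀ x ∈ Icc a b, HasDerivAt F (f x) x) (hf : ContinuousOn f (Icc a b))
    (hf_nonneg : ∀ x ∈ Icc a b, 0 ≤ f x) :
    ∫⁻ x in Ico a b, ENNReal.ofReal (f x) = ENNReal.ofReal (F b - F a) := by
  have hint : IntegrableOn f (Ioc a b) := hf.integrableOn_Icc.mono_set Ioc_subset_Icc_self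
  have hnonneg : 0 ≤ᵐ[volume.restrict (Ioc a b)] f :=
    ae_restrict_of_forall_mem measurableSet_Ioc fun x hx ↦ hf_nonneg x (Ioc_subset_Icc_self hx)
  rw [restrict_Ico_eq_restrict_Ioc, ← ofReal_integral_eq_lintegral_ofReal hint hnonneg,
    ← intervalIntegral.integral_of_le hab, intervalIntegral.integral_eq_sub_of_hasDerivAt]
  · rwa [uIcc_of_le hab]
  · exact (hf.mono (uIcc_of_le hab).le).intervalIntegrable

lemma lintegral_Ico_div_sq {c a b : ℝ} (hc : 0 ≤ c) (ha : 0 < a) (hab : a ≤ b) :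
    ∫⁻ x in Ico a b, ENNReal.ofReal (c / x ^ 2) = ENNReal.ofReal (c / a - c / b) := by
  have hpos : ∀ x ∈ Icc a b, 0 < x := fun x hx ↦ ha.trans_le hx.1
  have hderiv : ∀ x ∈ Icc a b, HasDerivAt (fun x ↦ -c * x⁻¹) (c / x ^ 2) x :=
    fun x hx ↦ by simpa [div_eq_mul_inv] using (hasDerivAt_inv (hpos x hx).ne').const_mul (-c)
  rw [lintegral_Ico_ofReal_eq_sub_of_hasDerivAt hab hderiv
    (continuousOn_const.div (continuousOn_pow 2) fun x hx ↦ (pow_pos (hpos x hx) 2).ne')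
    (fun x _ ↦ div_nonneg hc (sq_nonneg x))]
  ring_nf

lemma hasDerivAt_log_sub_log_sub_inv {z x : ℝ} (hx : 0 < x) (hxz : x < z) :
    HasDerivAt (fun x ↦ ((log x - log (z - x)) / z - x⁻¹) / z) (1 / (x ^ 2 * (z - x))) x := by
  have hz : z ≠ 0 := (hx.trans hxz).ne'
  have hzx : z - x ≠ 0 := (sub_pos.2 hxz).ne'
  have hlog : HasDerivAt (fun x ↦ log (z - x)) ((z - x)⁻¹ * -1) x :=
    (hasDerivAt_log hzx).comp x ((hasDerivAt_id x).const_sub z)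
  refine ((((hasDerivAt_log hx.ne').sub hlog).div_const z).sub
    (hasDerivAt_inv hx.ne')).div_const z |>.congr_deriv ?_
  field_simp
  ring

lemma lintegral_Ico_one_sub_one_div_sq_mul_sub {c z : ℝ} (hc : 0 ≤ c) (hz : 2 ≤ z) :
    ∫⁻ x in Ico 1 (z - 1), ENNReal.ofReal (c / (x ^ 2 * (z - x))) =
      ENNReal.ofReal (c * (2 * log (z - 1) / z - 1 / (z - 1) + 1) / z) := by
  have hpos : ∀ x ∈ Icc 1 (z - 1), 0 < x ∧ 0 < z - x := fun x hx ↦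
    ⟨by linarith [hx.1], by linarith [hx.2]⟩
  have hderiv : ∀ x ∈ Icc 1 (z - 1), HasDerivAt
      (fun x ↦ c * (((log x - log (z - x)) / z - x⁻¹) / z)) (c / (x ^ 2 * (z - x))) x :=
    fun x hx ↦ by
      simpa [div_eq_mul_inv] using
        (hasDerivAt_log_sub_log_sub_inv (hpos x hx).1 (sub_pos.1 (hpos x hx).2)).const_mul c
  have hcont : ContinuousOn (fun x ↦ c / (x ^ 2 * (z - x))) (Icc 1 (z - 1)) :=
    continuousOn_const.div (by fun_prop) fun x hx ↦ by
      obtain ⟨h1, h2⟩ := hpos x hx; positivity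
  rw [lintegral_Ico_ofReal_eq_sub_of_hasDerivAt (by linarith) hderiv hcont
    (fun x hx ↦ by obtain ⟨h1, h2⟩ := hpos x hx; positivity)]
  have hz0 : z ≠ 0 := by linarith
  have hz1 : z - 1 ≠ 0 := by linarith
  congr 1
  simp only [sub_sub_cancel, log_one, inv_one]
  field_simp
  ring

/-- The law of `B * min X 2`, for `B` Bernoulli(`ρ`) independent of a Pareto variable `X` with
`P(X ≥ y) = 1 / y` on `[1, ∞)`. -/
noncomputable def cappedPareto (ρ : ℝ) : Measure ℝ :=
  ENNReal.ofReal (1 - ρ) • Measure.dirac 0 +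
    (volume.restrict (Ico 1 2)).withDensity (fun y ↦ ENNReal.ofReal (ρ / y ^ 2)) +
    ENNReal.ofReal (ρ / 2) • Measure.dirac 2

instance (ρ : ℝ) : SFinite (cappedPareto ρ) := by
  unfold cappedPareto; infer_instance

noncomputable def cappedParetoTail (ρ y : ℝ) : ℝ :=
  if y ≤ 0 then 1 else if y ≤ 1 then ρ else if y ≤ 2 then ρ / y else 0

lemma cappedParetoTail_of_pos_of_le_one (ρ : ℝ) {y : ℝ} (h0 : 0 < y) (h1 : y ≤ 1) :
    cappedParetoTail ρ y = ρ := by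
  simp [cappedParetoTail, h0.not_ge, h1]

lemma cappedParetoTail_of_one_le_of_le_two (ρ : ℝ) {y : ℝ} (h1 : 1 ≤ y) (h2 : y ≤ 2) :
    cappedParetoTail ρ y = ρ / y := by
  rcases h1.eq_or_lt with rfl | h1
  · simp [cappedParetoTail]
  · simp [cappedParetoTail, h1.not_ge, h2, (zero_lt_one.trans h1).not_ge]

lemma cappedParetoTail_of_two_lt (ρ : ℝ) {y : ℝ} (h2 : 2 < y) : cappedParetoTail ρ y = 0 := by
  simp [cappedParetoTail, h2.not_ge, (one_lt_two.trans h2).not_ge, (two_pos.trans h2).not_ge]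

lemma eq_cappedParetoTail {ρ : ℝ} {g : ℝ → ℝ} (h0 : ∀ y, y ≤ 0 → g y = 1)
    (h1 : ∀ y, 0 < y → y ≤ 1 → g y = ρ) (h2 : ∀ y, 1 ≤ y → y ≤ 2 → g y = ρ / y)
    (h3 : ∀ y, 2 < y → g y = 0) : g = cappedParetoTail ρ := by
  ext y
  unfold cappedParetoTail
  split_ifs with hy0 hy1 hy2
  · exact h0 y hy0
  · exact h1 y (not_le.1 hy0) hy1
  · exact h2 y (not_le.1 hy1).le hy2
  · exact h3 y (not_le.1 hy2)

lemma cappedPareto_Ici {ρ : ℝ} (hρ0 : 0 ≤ ρ) (hρ1 : ρ ≤ 1) (a : ℝ) :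
    cappedPareto ρ (Ici a) = ENNReal.ofReal (cappedParetoTail ρ a) := by
  rw [cappedPareto, Measure.add_apply, Measure.add_apply, Measure.smul_apply, Measure.smul_apply,
    withDensity_apply _ measurableSet_Ici, Measure.restrict_restrict measurableSet_Ici,
    inter_comm, Ico_inter_Ici, Measure.dirac_apply' _ measurableSet_Ici,
    Measure.dirac_apply' _ measurableSet_Ici, cappedParetoTail]
  have hρ2 : 0 ≤ ρ / 2 := by positivity
  rcases le_or_gt a 0 with h0 | h0
  · simp only [if_pos h0, max_eq_left (h0.trans zero_le_one),
      lintegral_Ico_div_sq hρ0 one_pos one_le_two,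
      indicator_of_mem (mem_Ici.2 h0), indicator_of_mem (mem_Ici.2 (h0.trans zero_le_two)),
      Pi.one_apply, smul_eq_mul, mul_one]
    rw [← ENNReal.ofReal_add (by linarith) (by linarith), ← ENNReal.ofReal_add (by linarith) hρ2]
    congr 1; ring
  rcases le_or_gt a 1 with h1 | h1
  · simp only [if_neg h0.not_ge, if_pos h1, max_eq_left h1,
      lintegral_Ico_div_sq hρ0 one_pos one_le_two,
      indicator_of_notMem (notMem_Ici.2 h0), indicator_of_mem (mem_Ici.2 (h1.trans one_le_two)),
      Pi.one_apply, smul_eq_mul, mul_one, mul_zero, zero_add]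
    rw [← ENNReal.ofReal_add (by linarith) hρ2]
    congr 1; ring
  rcases le_or_gt a 2 with h2 | h2
  · simp only [if_neg h0.not_ge, if_neg h1.not_ge, if_pos h2, max_eq_right h1.le,
      lintegral_Ico_div_sq hρ0 h0 h2, indicator_of_notMem (notMem_Ici.2 h0),
      indicator_of_mem (mem_Ici.2 h2),
      Pi.one_apply, smul_eq_mul, mul_one, mul_zero, zero_add]
    rw [← ENNReal.ofReal_add (sub_nonneg.2 (div_le_div_of_nonneg_left hρ0 h0 h2)) hρ2]
    congr 1; ring
  · simp only [if_neg h0.not_ge, if_neg h1.not_ge, if_neg h2.not_ge, max_eq_right h1.le,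
      Ico_eq_empty_of_le h2.le, Measure.restrict_empty, lintegral_zero_measure,
      indicator_of_notMem (notMem_Ici.2 h0), indicator_of_notMem (notMem_Ici.2 h2),
      smul_eq_mul, mul_zero, add_zero, ENNReal.ofReal_zero]

lemma map_eq_cappedPareto {Ω : Type*} [MeasurableSpace Ω] {μ : Measure Ω} [IsFiniteMeasure μ]
    {Y : Ω → ℝ} (hY : Measurable Y) {ρ : ℝ} (hρ0 : 0 ≤ ρ) (hρ1 : ρ ≤ 1)
    (htail : (fun y ↦ (μ {ω | y ≤ Y ω}).toReal) = cappedParetoTail ρ) :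
    μ.map Y = cappedPareto ρ :=
  Measure.ext_of_Ici _ _ fun a ↦ by
    rw [Measure.map_apply hY measurableSet_Ici, cappedPareto_Ici hρ0 hρ1, ← htail,
      ENNReal.ofReal_toReal (measure_ne_top μ _)]
    rfl

lemma Measure.conv_apply_Ici (μ ν : Measure ℝ) [SFinite ν] (z : ℝ) :
    (μ ∗ ν) (Ici z) = ∫⁻ x, ν (Ici (z - x)) ∂μ := by
  rw [← lintegral_indicator_one measurableSet_Ici,
    Measure.lintegral_conv (measurable_one.indicator measurableSet_Ici)]
  refine lintegral_congr fun x ↦ ?_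
  rw [← lintegral_indicator_one measurableSet_Ici]
  refine lintegral_congr fun y ↦ ?_
  simp only [indicator, mem_Ici, sub_le_iff_le_add', Pi.one_apply]

lemma setLIntegral_Ico_one_two_mul_cappedParetoTail_sub {ρ z : ℝ} (hρ0 : 0 ≤ ρ) (hz2 : 2 ≤ z)
    (hz3 : z ≤ 3) :
    ∫⁻ x in Ico 1 2, ENNReal.ofReal (ρ / x ^ 2) * ENNReal.ofReal (cappedParetoTail ρ (z - x)) =
      ENNReal.ofReal (ρ ^ 2 * (2 * log (z - 1) / z ^ 2 + 2 / z - 1 / 2)) := by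
  have hleft : EqOn
      (fun x ↦ ENNReal.ofReal (ρ / x ^ 2) * ENNReal.ofReal (cappedParetoTail ρ (z - x)))
      (fun x ↦ ENNReal.ofReal (ρ ^ 2 / (x ^ 2 * (z - x)))) (Ico 1 (z - 1)) := fun x hx ↦ by
    dsimp only
    rw [cappedParetoTail_of_one_le_of_le_two ρ (by linarith [hx.2]) (by linarith [hx.1]),
      ← ENNReal.ofReal_mul (by have := hx.1; positivity)]
    congr 1; field_simp
  have hright : EqOn
      (fun x ↦ ENNReal.ofReal (ρ / x ^ 2) * ENNReal.ofReal (cappedParetoTail ρ (z - x)))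
      (fun x ↦ ENNReal.ofReal (ρ ^ 2 / x ^ 2)) (Ico (z - 1) 2) := fun x hx ↦ by
    dsimp only
    rw [cappedParetoTail_of_pos_of_le_one ρ (by linarith [hx.2]) (by linarith [hx.1]),
      ← ENNReal.ofReal_mul (by have := hx.1; positivity)]
    congr 1; ring
  rw [← Ico_union_Ico_eq_Ico (by linarith : (1 : ℝ) ≤ z - 1) (by linarith : z - 1 ≤ 2),
    lintegral_union measurableSet_Ico Ico_disjoint_Ico_same,
    setLIntegral_congr_fun measurableSet_Ico hleft, setLIntegral_congr_fun measurableSet_Ico hright,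
    lintegral_Ico_one_sub_one_div_sq_mul_sub (sq_nonneg ρ) hz2,
    lintegral_Ico_div_sq (sq_nonneg ρ) (by linarith) (by linarith)]
  have hlog : 0 ≤ log (z - 1) := log_nonneg (by linarith)
  have hinv : 1 / (z - 1) ≤ 1 := (div_le_one (by linarith)).2 (by linarith)
  have hfirst : 0 ≤ ρ ^ 2 * (2 * log (z - 1) / z - 1 / (z - 1) + 1) / z := by
    have : 0 ≤ 2 * log (z - 1) / z := by positivity
    exact div_nonneg (mul_nonneg (sq_nonneg ρ) (by linarith)) (by linarith)
  have hsecond : 0 ≤ ρ ^ 2 / (z - 1) - ρ ^ 2 / 2 :=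
    sub_nonneg.2 (div_le_div_of_nonneg_left (sq_nonneg ρ) (by linarith) (by linarith))
  have hz0 : z ≠ 0 := by linarith
  have hz1 : z - 1 ≠ 0 := by linarith
  rw [← ENNReal.ofReal_add hfirst hsecond]
  congr 1
  field_simp
  ring

lemma cappedPareto_conv_cappedPareto_Ici {ρ z : ℝ} (hρ0 : 0 ≤ ρ) (hρ1 : ρ ≤ 1) (hz2 : 2 < z)
    (hz3 : z ≤ 3) :
    (cappedPareto ρ ∗ cappedPareto ρ) (Ici z) =
      ENNReal.ofReal (2 * ρ ^ 2 * (log (z - 1) / z + 1) / z) := by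
  simp_rw [Measure.conv_apply_Ici, cappedPareto_Ici hρ0 hρ1]
  rw [cappedPareto, lintegral_add_measure, lintegral_add_measure, lintegral_smul_measure,
    lintegral_smul_measure, lintegral_dirac, lintegral_dirac,
    lintegral_withDensity_eq_lintegral_mul_non_measurable _ (by fun_prop)
      (ae_of_all _ fun _ ↦ ENNReal.ofReal_lt_top)]
  simp only [Pi.mul_apply]
  rw [setLIntegral_Ico_one_two_mul_cappedParetoTail_sub hρ0 hz2.le hz3, sub_zero,
    cappedParetoTail_of_two_lt ρ hz2,
    cappedParetoTail_of_pos_of_le_one ρ (by linarith) (by linarith)]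
  have hlog : 0 ≤ log (z - 1) := log_nonneg (by linarith)
  have hhalf : 1 / 2 ≤ 2 / z := by rw [div_le_div_iff₀ two_pos (by linarith)]; linarith
  have hdensity : 0 ≤ ρ ^ 2 * (2 * log (z - 1) / z ^ 2 + 2 / z - 1 / 2) := by
    have : 0 ≤ 2 * log (z - 1) / z ^ 2 := by positivity
    exact mul_nonneg (sq_nonneg ρ) (by linarith)
  rw [ENNReal.ofReal_zero, smul_zero, zero_add, smul_eq_mul, ← ENNReal.ofReal_mul (by positivity),
    ← ENNReal.ofReal_add hdensity (by positivity)]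
  have hz0 : z ≠ 0 := by linarith
  congr 1
  field_simp
  ring

lemma strictMonoOn_log_sub_one_div :
    StrictMonoOn (fun z ↦ log (z - 1) / z) (Ioc 1 (1 + exp 1)) := by
  refine strictMonoOn_of_deriv_pos (convex_Ioc _ _) ?_ fun x hx ↦ ?_
  · refine ContinuousOn.div ?_ continuousOn_id fun x hx ↦ by linarith [hx.1]
    exact continuousOn_log.comp (continuousOn_id.sub continuousOn_const) fun x hx ↦ by
      simp only [mem_compl_iff, mem_singleton_iff, sub_eq_zero]; linarith [hx.1]
  rw [interior_Ioc] at hx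
  obtain ⟨hx1, hxe⟩ := hx
  have hderiv : HasDerivAt (fun z ↦ log (z - 1) / z)
      ((1 / (x - 1) * x - log (x - 1) * 1) / x ^ 2) x :=
    (((hasDerivAt_id' x).sub_const 1).log (by linarith)).div (hasDerivAt_id' x) (by linarith)
  have hlog : log (x - 1) < 1 := (log_lt_iff_lt_exp (by linarith)).2 (by linarith)
  have hquot : 1 < 1 / (x - 1) * x := by
    rw [one_div_mul_eq_div, one_lt_div (by linarith)]; linarith
  rw [hderiv.deriv]
  exact div_pos (by linarith) (by positivity)

theorem stmt_16 {Ω : Type*} [MeasurableSpace Ω] {μ : Measure Ω} [IsProbabilityMeasure μ]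
    (Y₁ Y₂ : Ω → ℝ) (hY₁ : Measurable Y₁) (hY₂ : Measurable Y₂)
    (hindep : IndepFun Y₁ Y₂ μ)
    (ρ : ℝ) (hρ0 : 0 < ρ) (hρ1 : ρ < 1)
    (htail : ∀ Y ∈ ({Y₁, Y₂} : Set (Ω → ℝ)),
      (∀ y : ℝ, y ≤ 0 → (μ {ω | y ≤ Y ω}).toReal = 1) ∧
      (∀ y : ℝ, 0 < y → y ≤ 1 → (μ {ω | y ≤ Y ω}).toReal = ρ) ∧
      (∀ y : ℝ, 1 ≤ y → y ≤ 2 → (μ {ω | y ≤ Y ω}).toReal = ρ / y) ∧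
      (∀ y : ℝ, 2 < y → (μ {ω | y ≤ Y ω}).toReal = 0)) :
    (∀ z ∈ Set.Ioc (2 : ℝ) 3,
        z * (μ {ω | z ≤ Y₁ ω + Y₂ ω}).toReal =
          2 * ρ ^ 2 * (Real.log (z - 1) / z + 1)) ∧
      StrictMonoOn (fun z : ℝ => z * (μ {ω | z ≤ Y₁ ω + Y₂ ω}).toReal)
        (Set.Ioc (2 : ℝ) 3) ∧
      (3 : ℝ) * (μ {ω | (3 : ℝ) ≤ Y₁ ω + Y₂ ω}).toReal =
        2 * ρ ^ 2 * (1 + Real.log 2 / 3) := by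
  have hlaw : ∀ Y ∈ ({Y₁, Y₂} : Set (Ω → ℝ)), Measurable Y → μ.map Y = cappedPareto ρ :=
    fun Y hY hYm ↦ by
      obtain ⟨h0, h1, h2, h3⟩ := htail Y hY
      exact map_eq_cappedPareto hYm hρ0.le hρ1.le (eq_cappedParetoTail h0 h1 h2 h3)
  have hsum : ∀ z, μ {ω | z ≤ Y₁ ω + Y₂ ω} = (cappedPareto ρ ∗ cappedPareto ρ) (Ici z) :=
    fun z ↦ by
      have hconv := hindep.map_add_eq_map_conv_map hY₁ hY₂
      rw [hlaw Y₁ (by simp) hY₁, hlaw Y₂ (by simp) hY₂] at hconv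
      rw [← hconv, Measure.map_apply (hY₁.add hY₂) measurableSet_Ici]
      rfl
  have hformula : ∀ z ∈ Ioc (2 : ℝ) 3,
      z * (μ {ω | z ≤ Y₁ ω + Y₂ ω}).toReal = 2 * ρ ^ 2 * (log (z - 1) / z + 1) := fun z hz ↦ by
    have hlog : 0 ≤ log (z - 1) := log_nonneg (by linarith [hz.1])
    have hz0 : 0 < z := by linarith [hz.1]
    rw [hsum, cappedPareto_conv_cappedPareto_Ici hρ0.le hρ1.le hz.1 hz.2,
      ENNReal.toReal_ofReal (by positivity), mul_div_cancel₀ _ hz0.ne']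
  refine ⟨hformula, ?_, ?_⟩
  · have hmono := strictMonoOn_log_sub_one_div.mono
      (Ioc_subset_Ioc one_le_two (by linarith [add_one_le_exp 1]) : Ioc (2 : ℝ) 3 ⊆ _)
    refine StrictMonoOn.congr (fun a ha b hb hab ↦ ?_) (fun z hz ↦ (hformula z hz).symm)
    have := hmono ha hb hab
    dsimp only at this ⊢
    gcongr
  · rw [hformula 3 ⟨by norm_num, le_rfl⟩, show (3 : ℝ) - 1 = 2 by norm_num, add_comm]
end

section
/- Let Y₁, Y₂ be i.i.d. random variables each taking values 0, 1, 2 with probabilities 1/9, 4/9, 4/9 respectively. Then: (a) for each item sold separately, the revenue p·P[Y ≥ p] over p ∈ {1,2} equals 8/9, so separate sales earn 16/9; (b) the bundle at price 3 sells with probability P[Y₁+Y₂ ≥ 3] = 48/81, giving bundle revenue 3·(48/81) = 16/9; and (c) the mechanism selling each item at 2 with the bundle at 3 earns 160/81, so max(PC, PB)/OPT ≤ 9/10. -/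
open MeasureTheory ProbabilityTheory

open scoped ENNReal in
lemma findiv' (a b : ℝ≥0∞) (ha : a ≠ ⊤) (hb : b ≠ 0) : a / b ≠ ⊤ :=
  (ENNReal.div_lt_top ha hb).ne

open scoped ENNReal in
lemma fin49' : (4:ℝ≥0∞)/9 ≠ ⊤ := findiv' 4 9 (by norm_num) (by norm_num)

open scoped ENNReal in
lemma fin19' : (1:ℝ≥0∞)/9 ≠ ⊤ := findiv' 1 9 (by norm_num) (by norm_num)

open scoped ENNReal in
lemma key48 : (4:ℝ≥0∞)/9*(4/9) + ((4:ℝ≥0∞)/9*(4/9) + 4/9*(4/9)) = 48/81 := by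
  rw [← ENNReal.toReal_eq_toReal_iff'
    (by simp [ENNReal.add_ne_top, ENNReal.mul_ne_top, fin49'])
    (findiv' 48 81 (by norm_num) (by norm_num))]
  simp [ENNReal.toReal_mul, ENNReal.toReal_div, ENNReal.toReal_add, ENNReal.mul_ne_top, fin49']
  norm_num

open scoped ENNReal in
lemma key8 : (4:ℝ≥0∞)/9*(1/9) + (1:ℝ≥0∞)/9*(4/9) = 8/81 := by
  rw [← ENNReal.toReal_eq_toReal_iff'
    (by simp [ENNReal.add_ne_top, ENNReal.mul_ne_top, fin49', fin19'])
    (findiv' 8 81 (by norm_num) (by norm_num))]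
  simp [ENNReal.toReal_mul, ENNReal.toReal_div, ENNReal.toReal_add, ENNReal.mul_ne_top, fin49', fin19']
  norm_num

theorem stmt_19 {Ω : Type*} [MeasurableSpace Ω] {μ : Measure Ω} [IsProbabilityMeasure μ]
    (Y₁ Y₂ : Ω → ℝ) (hY₁ : Measurable Y₁) (hY₂ : Measurable Y₂)
    (hindep : IndepFun Y₁ Y₂ μ)
    (hdist : ∀ Y ∈ ({Y₁, Y₂} : Set (Ω → ℝ)),
      μ {ω | Y ω = 0} = 1 / 9 ∧ μ {ω | Y ω = 1} = 4 / 9 ∧ μ {ω | Y ω = 2} = 4 / 9 ∧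
        (∀ ω, Y ω = 0 ∨ Y ω = 1 ∨ Y ω = 2)) :
    (∀ p ∈ ({1, 2} : Set ℝ), p * (μ {ω | p ≤ Y₁ ω}).toReal = 8 / 9) ∧
      (μ {ω | (3 : ℝ) ≤ Y₁ ω + Y₂ ω}).toReal = 48 / 81 ∧
      (3 : ℝ) * (48 / 81 : ℝ) = 16 / 9 ∧
      3 * (μ {ω | (3 : ℝ) ≤ Y₁ ω + Y₂ ω}).toReal +
          2 * (μ {ω | (Y₁ ω = 2 ∧ Y₂ ω = 0) ∨ (Y₁ ω = 0 ∧ Y₂ ω = 2)}).toReal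
        = 160 / 81 ∧
      max (16 / 9 : ℝ) (16 / 9) ≤ (9 / 10) * (160 / 81) := by
  obtain ⟨h10, h11, h12, h1r⟩ := hdist Y₁ (by simp)
  obtain ⟨h20, h21, h22, h2r⟩ := hdist Y₂ (by simp)
  have m1 : ∀ a : ℝ, MeasurableSet {ω | Y₁ ω = a} := fun a =>
    hY₁ (measurableSet_singleton a)
  have m2 : ∀ a : ℝ, MeasurableSet {ω | Y₂ ω = a} := fun a =>
    hY₂ (measurableSet_singleton a)
  have hE : ∀ a b : ℝ, μ ({ω | Y₁ ω = a} ∩ {ω | Y₂ ω = b}) =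
      μ {ω | Y₁ ω = a} * μ {ω | Y₂ ω = b} := fun a b =>
    hindep.measure_inter_preimage_eq_mul {a} {b} (measurableSet_singleton a)
      (measurableSet_singleton b)
  have mE : ∀ a b : ℝ, MeasurableSet ({ω | Y₁ ω = a} ∩ {ω | Y₂ ω = b}) :=
    fun a b => (m1 a).inter (m2 b)
  -- part (a)
  have ha1 : μ {ω | (1:ℝ) ≤ Y₁ ω} = 8 / 9 := by
    have hs : {ω | (1:ℝ) ≤ Y₁ ω} = {ω | Y₁ ω = 1} ∪ {ω | Y₁ ω = 2} := by
      ext ω; rcases h1r ω with h | h | h <;> simp [h] <;> norm_num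
    rw [hs, measure_union ?_ (m1 2), h11, h12]
    · norm_num
      rw [← ENNReal.add_div]
      norm_num
    · rw [Set.disjoint_left]; intro ω h1 h2
      simp only [Set.mem_setOf_eq] at h1 h2; rw [h1] at h2; norm_num at h2
  have ha2 : μ {ω | (2:ℝ) ≤ Y₁ ω} = 4 / 9 := by
    have hs : {ω | (2:ℝ) ≤ Y₁ ω} = {ω | Y₁ ω = 2} := by
      ext ω; rcases h1r ω with h | h | h <;> simp [h] <;> norm_num
    rw [hs, h12]
  -- bundle event
  have hb : μ {ω | (3:ℝ) ≤ Y₁ ω + Y₂ ω} = 48 / 81 := by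
    have hs : {ω | (3:ℝ) ≤ Y₁ ω + Y₂ ω} =
        ({ω | Y₁ ω = 1} ∩ {ω | Y₂ ω = 2}) ∪
        (({ω | Y₁ ω = 2} ∩ {ω | Y₂ ω = 1}) ∪ ({ω | Y₁ ω = 2} ∩ {ω | Y₂ ω = 2})) := by
      ext ω; rcases h1r ω with h | h | h <;> rcases h2r ω with g | g | g <;>
        simp [h, g] <;> norm_num
    have d1 : Disjoint ({ω | Y₁ ω = 1} ∩ {ω | Y₂ ω = 2})
        (({ω | Y₁ ω = 2} ∩ {ω | Y₂ ω = 1}) ∪ ({ω | Y₁ ω = 2} ∩ {ω | Y₂ ω = 2})) := by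
      rw [Set.disjoint_left]; intro ω h1 h2
      obtain ⟨ha, _⟩ := h1
      rcases h2 with ⟨hb', _⟩ | ⟨hb', _⟩ <;>
        · simp only [Set.mem_setOf_eq] at ha hb'; rw [ha] at hb'; norm_num at hb'
    have d2 : Disjoint ({ω | Y₁ ω = 2} ∩ {ω | Y₂ ω = 1})
        ({ω | Y₁ ω = 2} ∩ {ω | Y₂ ω = 2}) := by
      rw [Set.disjoint_left]; intro ω h1 h2
      obtain ⟨_, ha⟩ := h1; obtain ⟨_, hb'⟩ := h2
      simp only [Set.mem_setOf_eq] at ha hb'; rw [ha] at hb'; norm_num at hb'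
    rw [hs, measure_union d1 ((mE 2 1).union (mE 2 2)), measure_union d2 (mE 2 2),
      hE, hE, hE, h11, h12, h21, h22, key48]
  -- extra event
  have hc : μ {ω | (Y₁ ω = 2 ∧ Y₂ ω = 0) ∨ (Y₁ ω = 0 ∧ Y₂ ω = 2)} = 8 / 81 := by
    have hs : {ω | (Y₁ ω = 2 ∧ Y₂ ω = 0) ∨ (Y₁ ω = 0 ∧ Y₂ ω = 2)} =
        ({ω | Y₁ ω = 2} ∩ {ω | Y₂ ω = 0}) ∪ ({ω | Y₁ ω = 0} ∩ {ω | Y₂ ω = 2}) := by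
      ext ω; simp [Set.mem_setOf_eq, Set.mem_inter_iff]
    have d : Disjoint ({ω | Y₁ ω = 2} ∩ {ω | Y₂ ω = 0})
        ({ω | Y₁ ω = 0} ∩ {ω | Y₂ ω = 2}) := by
      rw [Set.disjoint_left]; intro ω h1 h2
      obtain ⟨ha, _⟩ := h1; obtain ⟨hb', _⟩ := h2
      simp only [Set.mem_setOf_eq] at ha hb'; rw [ha] at hb'; norm_num at hb'
    rw [hs, measure_union d (mE 0 2), hE, hE, h12, h20, h10, h22, key8]
  refine ⟨?_, ?_, by norm_num, ?_, by norm_num⟩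
  · intro p hp
    rcases hp with h | h
    · subst h; rw [ha1]; simp [ENNReal.toReal_div]
    · simp only [Set.mem_singleton_iff] at h; subst h
      rw [ha2]; simp [ENNReal.toReal_div]; norm_num
  · rw [hb]; simp [ENNReal.toReal_div]
  · rw [hb, hc]; simp [ENNReal.toReal_div]; norm_num
end
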